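/- Let A be a bounded self-adjoint positive-definite operator on l²(E) (⟨f, A f⟩ > 0 for all f ≠ 0), let ξ ⊆ E and x ∈ E with x ∉ ξ. For finite F ⊆ ξ write r(F) := det A(F∪{x}, F∪{x}) / det A(F,F), where A(S,S) := (A(y,z))_{y,z∈S}. Then: (i) r is antitone, i.e. F ⊆ F' ⊆ ξ finite implies r(F') ≤ r(F); and (ii) the infimum of r(F) over all finite F ⊆ ξ equals α(x;ξ) := inf{⟨e_x − f, A(e_x − f)⟩ : f in the linear span of {e_y : y ∈ ξ}}. In particular the net (r(ξ∩Λ))_{Λ finite, Λ ↑ E} converges to α(x;ξ). -/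

import Mathlib

/-!
For finite `F ∌ x`, the matrix `A(F ∪ {x}, F ∪ {x})` is, up to reindexing, the block matrix
`[[G, v], [v*, A(x,x)]]` of the form `⟪·, A ·⟫` on the family `(e_y)_{y ∈ F}, e_x`, with
`G = A(F,F)` positive definite. By the Schur complement formula its determinant is
`det G · (A(x,x) - v* G⁻¹ v)`, and the same formula shows that `A(x,x) - v* G⁻¹ v` is the minimum
of `⟪e_x - f, A (e_x - f)⟫` over `f ∈ span {e_y : y ∈ F}`. So `r(F)` is a minimum over subspaces
increasing with `F`, hence antitone, and since every vector of `span {e_y : y ∈ ξ}` lies in one of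
these finite spans, the infimum of `r` over finite `F ⊆ ξ` is `α(x;ξ)`; monotone convergence gives
the limit of the net.
-/

open Filter

/-- The standard basis vector `e_x` of `l²(E)`. -/
noncomputable def evec {E : Type*} [DecidableEq E] (x : E) : lp (fun _ : E => ℂ) 2 :=
  lp.single 2 x 1

/-- The matrix entries `A(x,y) = ⟨e_x, A e_y⟩` of a bounded operator on `l²(E)`. -/
noncomputable def matEnt {E : Type*} [DecidableEq E]
    (A : lp (fun _ : E => ℂ) 2 →L[ℂ] lp (fun _ : E => ℂ) 2) (x y : E) : ℂ :=
  inner ℂ (evec x) (A (evec y))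

/-- The determinant ratio `det A(F∪{x},F∪{x}) / det A(F,F)` (a real number). -/
noncomputable def detRatio {E : Type*} [DecidableEq E]
    (A : lp (fun _ : E => ℂ) 2 →L[ℂ] lp (fun _ : E => ℂ) 2) (x : E) (F : Finset E) : ℝ :=
  ((Matrix.of fun i j : (insert x F : Finset E) => matEnt A i j).det /
    (Matrix.of fun i j : F => matEnt A i j).det).re

/-- The Papangelou intensity `α(x;ξ)` as a variational infimum. -/
noncomputable def alphaInf {E : Type*} [DecidableEq E]
    (A : lp (fun _ : E => ℂ) 2 →L[ℂ] lp (fun _ : E => ℂ) 2) (x : E) (ξ : Set E) : ℝ :=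
  sInf ((fun f => (inner ℂ (evec x - f) (A (evec x - f)) : ℂ).re) ''
    (Submodule.span ℂ (evec '' ξ) : Set (lp (fun _ : E => ℂ) 2)))

open Matrix
open scoped InnerProductSpace ComplexOrder

lemma Submodule.exists_finset_subset_mem_span_image {R M α : Type*} [Semiring R]
    [AddCommMonoid M] [Module R M] {v : α → M} {s : Set α} {f : M}
    (hf : f ∈ Submodule.span R (v '' s)) :
    ∃ F : Finset α, (F : Set α) ⊆ s ∧ f ∈ Submodule.span R (v '' F) := by
  classical
  obtain ⟨T, hTs, hfT⟩ := Submodule.mem_span_finite_of_mem_span hf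
  obtain ⟨F, hFs, rfl⟩ := Finset.subset_set_image_iff.mp hTs
  exact ⟨F, hFs, by rwa [Finset.coe_image] at hfT⟩

section FormMatrix

variable {𝕜 H ι κ ι' κ' : Type*} [RCLike 𝕜] [NormedAddCommGroup H] [InnerProductSpace 𝕜 H]
  (T : H →ₗ[𝕜] H)

def formMatrix (u : ι → H) (v : κ → H) : Matrix ι κ 𝕜 := of fun i j => ⟪u i, T (v j)⟫_𝕜

lemma formMatrix_comp (u : ι → H) (v : κ → H) (e : ι' → ι) (f : κ' → κ) :
    formMatrix T (u ∘ e) (v ∘ f) = (formMatrix T u v).submatrix e f :=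
  rfl

lemma formMatrix_sumElim (u : ι → H) (u' : ι' → H) (v : κ → H) (v' : κ' → H) :
    formMatrix T (Sum.elim u u') (Sum.elim v v') =
      fromBlocks (formMatrix T u v) (formMatrix T u v')
        (formMatrix T u' v) (formMatrix T u' v') := by
  ext (i | i) (j | j) <;> rfl

lemma conjTranspose_formMatrix {T : H →ₗ[𝕜] H} (hT : T.IsSymmetric) (u : ι → H) (v : κ → H) :
    (formMatrix T u v)ᴴ = formMatrix T v u := by
  ext i j
  simp [formMatrix, hT (v i)]

lemma inner_sum_smul_apply_sum_smul [Fintype ι] (u : ι → H) (a b : ι → 𝕜) :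
    ⟪∑ i, a i • u i, T (∑ j, b j • u j)⟫_𝕜 = star a ⬝ᵥ (formMatrix T u u *ᵥ b) := by
  simp only [formMatrix, dotProduct, mulVec, of_apply, sum_inner, inner_sum, inner_smul_left,
    inner_smul_right, map_sum, map_smul, Finset.mul_sum, Pi.star_apply, RCLike.star_def]
  rw [Finset.sum_comm]
  exact Finset.sum_congr rfl fun i _ => Finset.sum_congr rfl fun j _ => by ring

lemma posDef_formMatrix [Fintype ι] {T : H →ₗ[𝕜] H} (hT : T.IsSymmetric)
    (hpos : ∀ f : H, f ≠ 0 → 0 < RCLike.re ⟪f, T f⟫_𝕜) {u : ι → H} (hu : LinearIndependent 𝕜 u) :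
    (formMatrix T u u).PosDef := by
  refine .of_dotProduct_mulVec_pos (conjTranspose_formMatrix hT u u) fun c hc => ?_
  have hne : ∑ i, c i • u i ≠ 0 := fun h => hc (funext (Fintype.linearIndependent_iff.mp hu c h))
  rw [← inner_sum_smul_apply_sum_smul, RCLike.pos_iff]
  exact ⟨hpos _ hne, hT.im_inner_self_apply _⟩

end FormMatrix

section Schur

variable {𝕜 H ι : Type*} [RCLike 𝕜] [NormedAddCommGroup H] [InnerProductSpace 𝕜 H]
  [Fintype ι] [DecidableEq ι]

lemma isLeast_re_det_formMatrix_div {T : H →ₗ[𝕜] H} (hT : T.IsSymmetric) {u : ι → H}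
    (hG : (formMatrix T u u).PosDef) (w : H) :
    IsLeast ((fun f => RCLike.re ⟪w - f, T (w - f)⟫_𝕜) '' Submodule.span 𝕜 (Set.range u))
      (RCLike.re ((formMatrix T (Sum.elim u fun _ : Unit => w) (Sum.elim u fun _ => w)).det /
        (formMatrix T u u).det)) := by
  set u' : ι ⊕ Unit → H := Sum.elim u fun _ => w
  set G := formMatrix T u u
  set B := formMatrix T u fun _ : Unit => w
  set D := formMatrix T (fun _ : Unit => w) (fun _ : Unit => w)
  set S := D - Bᴴ * G⁻¹ * B
  have : Invertible G := hG.isUnit.invertible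
  have hblocks : formMatrix T u' u' = fromBlocks G B Bᴴ D := by
    rw [formMatrix_sumElim, conjTranspose_formMatrix hT]
  have hdet : (formMatrix T u' u').det / G.det = S () () := by
    rw [hblocks, det_fromBlocks₁₁, invOf_eq_nonsing_inv, det_unique (D - _),
      mul_div_cancel_left₀ _ hG.det_pos.ne']
  -- `w - ∑ cᵢ uᵢ` has coordinates `(-c, 1)` on `u'`, so Schur's formula splits its form value into
  -- a `G`-part vanishing exactly at `c = G⁻¹ B 1` plus the Schur complement.
  have hquad (c : ι → 𝕜) : ⟪w - ∑ i, c i • u i, T (w - ∑ i, c i • u i)⟫_𝕜 =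
      star (-c + (G⁻¹ * B) *ᵥ 1) ⬝ᵥ (G *ᵥ (-c + (G⁻¹ * B) *ᵥ 1)) + S () () := by
    have hvec : w - ∑ i, c i • u i = ∑ k, ((-c) ⊕ᵥ 1) k • u' k := by
      simp [u', Fintype.sum_sum_type, sub_eq_neg_add]
    rw [hvec, inner_sum_smul_apply_sum_smul, hblocks, dotProduct_mulVec,
      schur_complement_eq₁₁ B _ _ _ hG.isHermitian, ← dotProduct_mulVec]
    simp [vecMul, dotProduct, S]
  rw [hdet]
  refine ⟨⟨∑ i, ((G⁻¹ * B) *ᵥ 1) i • u i,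
    (Submodule.mem_span_range_iff_exists_fun 𝕜).mpr ⟨_, rfl⟩, ?_⟩, ?_⟩
  · simp only [hquad, neg_add_cancel, star_zero, zero_dotProduct, zero_add]
  · rintro _ ⟨f, hf, rfl⟩
    obtain ⟨c, rfl⟩ := (Submodule.mem_span_range_iff_exists_fun 𝕜).mp hf
    have := hG.posSemidef.re_dotProduct_nonneg (-c + (G⁻¹ * B) *ᵥ 1)
    simp only [hquad, map_add]
    linarith

end Schur

section Papangelou

variable {E : Type*} [DecidableEq E]

lemma orthonormal_evec : Orthonormal ℂ (evec : E → lp (fun _ : E => ℂ) 2) := by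
  rw [orthonormal_iff_ite]
  intro i j
  simp [evec, lp.inner_single_left, lp.single_apply, Pi.single_apply]

variable (A : lp (fun _ : E => ℂ) 2 →L[ℂ] lp (fun _ : E => ℂ) 2)

lemma isLeast_detRatio
    (hsa : ∀ f g : lp (fun _ : E => ℂ) 2, (inner ℂ (A f) g : ℂ) = inner ℂ f (A g))
    (hpd : ∀ f : lp (fun _ : E => ℂ) 2, f ≠ 0 → 0 < (inner ℂ f (A f) : ℂ).re)
    {x : E} {F : Finset E} (hxF : x ∉ F) :
    IsLeast ((fun f => (inner ℂ (evec x - f) (A (evec x - f)) : ℂ).re) ''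
      Submodule.span ℂ (evec '' (F : Set E))) (detRatio A x F) := by
  set u : F → lp (fun _ : E => ℂ) 2 := fun i => evec i
  have hT : (A : lp (fun _ : E => ℂ) 2 →ₗ[ℂ] lp (fun _ : E => ℂ) 2).IsSymmetric := hsa
  have hG : (formMatrix (A : lp (fun _ : E => ℂ) 2 →ₗ[ℂ] _) u u).PosDef :=
    posDef_formMatrix hT hpd (orthonormal_evec.comp _ Subtype.val_injective).linearIndependent
  set e := (Finset.subtypeInsertEquivOption hxF).trans (Equiv.optionEquivSumPUnit.{0} F)
  have hdet : (Matrix.of fun i j : (insert x F : Finset E) => matEnt A i j).det =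
      (formMatrix (A : lp (fun _ : E => ℂ) 2 →ₗ[ℂ] _) (Sum.elim u fun _ : Unit => evec x)
        (Sum.elim u fun _ => evec x)).det := by
    have he : Sum.elim u (fun _ : Unit => evec x) =
        (fun i : (insert x F : Finset E) => evec (i : E)) ∘ e.symm := by
      funext i
      cases i <;> rfl
    rw [he, formMatrix_comp, det_submatrix_equiv_self]
    rfl
  have hspan : evec '' (F : Set E) = Set.range u := by
    rw [Set.range_comp', Subtype.range_coe]
  rw [detRatio, hdet, hspan]
  exact isLeast_re_det_formMatrix_div hT hG (evec x)

lemma detRatio_anti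
    (hsa : ∀ f g : lp (fun _ : E => ℂ) 2, (inner ℂ (A f) g : ℂ) = inner ℂ f (A g))
    (hpd : ∀ f : lp (fun _ : E => ℂ) 2, f ≠ 0 → 0 < (inner ℂ f (A f) : ℂ).re)
    {x : E} {F F' : Finset E} (hxF' : x ∉ F') (hFF' : F ⊆ F') :
    detRatio A x F' ≤ detRatio A x F :=
  (isLeast_detRatio A hsa hpd fun h => hxF' (hFF' h)).mono (isLeast_detRatio A hsa hpd hxF')
    (Set.image_mono (Submodule.span_mono (Set.image_mono (Finset.coe_subset.mpr hFF'))))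

lemma isGLB_detRatio
    (hsa : ∀ f g : lp (fun _ : E => ℂ) 2, (inner ℂ (A f) g : ℂ) = inner ℂ f (A g))
    (hpd : ∀ f : lp (fun _ : E => ℂ) 2, f ≠ 0 → 0 < (inner ℂ f (A f) : ℂ).re)
    {x : E} {ξ : Set E} (hx : x ∉ ξ) :
    IsGLB (detRatio A x '' {F : Finset E | (F : Set E) ⊆ ξ}) (alphaInf A x ξ) := by
  have hleast {F : Finset E} (hF : (F : Set E) ⊆ ξ) :=
    isLeast_detRatio A hsa hpd (x := x) fun h => hx (hF h)
  have hbdd : BddBelow ((fun f => (inner ℂ (evec x - f) (A (evec x - f)) : ℂ).re) ''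
      Submodule.span ℂ (evec '' ξ)) := by
    refine ⟨0, ?_⟩
    rintro _ ⟨f, hf, rfl⟩
    have hxf : evec x ≠ f := fun h =>
      orthonormal_evec.linearIndependent.notMem_span_image hx (h ▸ hf)
    exact (hpd _ (sub_ne_zero.mpr hxf)).le
  constructor
  · rintro _ ⟨F, hF, rfl⟩
    obtain ⟨f, hf, hfF⟩ := (hleast hF).1
    rw [← hfF]
    exact csInf_le hbdd ⟨f, Submodule.span_mono (Set.image_mono hF) hf, rfl⟩
  · intro b hb
    refine le_csInf ⟨_, 0, Submodule.zero_mem _, rfl⟩ ?_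
    rintro _ ⟨f, hf, rfl⟩
    obtain ⟨F, hF, hfF⟩ := Submodule.exists_finset_subset_mem_span_image hf
    exact (hb ⟨F, hF, rfl⟩).trans ((hleast hF).2 ⟨f, hfF, rfl⟩)

end Papangelou

theorem statement4_general {E : Type*} [DecidableEq E]
    (A : lp (fun _ : E => ℂ) 2 →L[ℂ] lp (fun _ : E => ℂ) 2)
    (hsa : ∀ f g : lp (fun _ : E => ℂ) 2, (inner ℂ (A f) g : ℂ) = inner ℂ f (A g))
    (hpd : ∀ f : lp (fun _ : E => ℂ) 2, f ≠ 0 → 0 < (inner ℂ f (A f) : ℂ).re)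
    (ξ : Set E) [DecidablePred (· ∈ ξ)] (x : E) (hx : x ∉ ξ) :
    (∀ F F' : Finset E, (F : Set E) ⊆ ξ → (F' : Set E) ⊆ ξ → F ⊆ F' →
        detRatio A x F' ≤ detRatio A x F) ∧
    sInf (detRatio A x '' {F : Finset E | (F : Set E) ⊆ ξ}) = alphaInf A x ξ ∧
    Tendsto (fun Λ : Finset E => detRatio A x (Λ.filter (· ∈ ξ))) atTop
      (nhds (alphaInf A x ξ)) := by
  have hanti (F F' : Finset E) (hF' : (F' : Set E) ⊆ ξ) (hFF' : F ⊆ F') :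
      detRatio A x F' ≤ detRatio A x F :=
    detRatio_anti A hsa hpd (fun h => hx (hF' h)) hFF'
  have hglb := isGLB_detRatio A hsa hpd hx
  have hrange : Set.range (fun Λ : Finset E => detRatio A x (Λ.filter (· ∈ ξ))) =
      detRatio A x '' {F : Finset E | (F : Set E) ⊆ ξ} := by
    ext r
    constructor
    · rintro ⟨Λ, rfl⟩
      exact ⟨_, fun y hy => (Finset.mem_filter.mp hy).2, rfl⟩
    · rintro ⟨F, hF, rfl⟩
      exact ⟨F, congrArg _ (Finset.filter_true_of_mem fun y hy => hF hy)⟩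
  refine ⟨fun F F' _ hF' => hanti F F' hF', hglb.csInf_eq ⟨_, ∅, by simp, rfl⟩,
    tendsto_atTop_isGLB (fun Λ Λ' h => ?_) (hrange ▸ hglb)⟩
  exact hanti _ _ (fun y hy => (Finset.mem_filter.mp hy).2) (Finset.filter_subset_filter _ h)

/-- **Monotone convergence of determinant ratios to the Papangelou intensity.**
Let `A` be a bounded self-adjoint positive-definite operator on `l²(E)`, `ξ ⊆ E`, `x ∉ ξ`.
For finite `F ⊆ ξ`, put `r(F) = det A(F∪{x},F∪{x}) / det A(F,F)`.  Then (i) `r` is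
antitone; (ii) `inf {r(F) : F ⊆ ξ finite} = α(x;ξ)`; and the net `(r(ξ∩Λ))_{Λ ↑ E}`
converges to `α(x;ξ)`. -/
theorem statement4 {E : Type*} [Countable E] [DecidableEq E]
    (A : lp (fun _ : E => ℂ) 2 →L[ℂ] lp (fun _ : E => ℂ) 2)
    (hsa : ∀ f g : lp (fun _ : E => ℂ) 2, (inner ℂ (A f) g : ℂ) = inner ℂ f (A g))
    (hpd : ∀ f : lp (fun _ : E => ℂ) 2, f ≠ 0 → 0 < (inner ℂ f (A f) : ℂ).re)
    (ξ : Set E) [DecidablePred (· ∈ ξ)] (x : E) (hx : x ∉ ξ) :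
    (∀ F F' : Finset E, (F : Set E) ⊆ ξ → (F' : Set E) ⊆ ξ → F ⊆ F' →
        detRatio A x F' ≤ detRatio A x F) ∧
    sInf (detRatio A x '' {F : Finset E | (F : Set E) ⊆ ξ}) = alphaInf A x ξ ∧
    Tendsto (fun Λ : Finset E => detRatio A x (Λ.filter (· ∈ ξ))) atTop
      (nhds (alphaInf A x ξ)) :=
  statement4_general A hsa hpd ξ x hx
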